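/- arXiv:2506.04105 — 5 statements merged into one kernel-verified Lean document; each statement's English description precedes it below -/
import Mathlib

section
/- Let G = ([N],E) have nonnegative real edge weights r_e. Suppose real numbers R_1,...,R_N ≥ 0 satisfy Σ_{i∈I} R_i ≥ r[E(I)] for every nonempty proper subset I ⊊ [N]. Then for any partition P of [N] into p ≥ 2 nonempty parts, r[E] - Σ_{i=1}^N R_i ≤ (1/(p-1))·Σ_{e∈E(P)} r_e. -/
/-!
For each part `α` of the partition apply the constraint to `I_α = [N] \ V_α`, which is nonempty
and proper because there are at least two parts, and sum over `α`. Every vertex lies in exactly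
`p - 1` of the sets `I_α`; an edge inside one part lies in `E(I_α)` for `p - 1` values of `α`,
a crossing edge for only `p - 2`. Hence `(p - 1) r[E] - r[E(P)] ≤ (p - 1) Σ R_i`.
-/

/-- Sum of edge weights over a set of (potential) edges. -/
noncomputable def wsum {N : ℕ} (r : Sym2 (Fin N) → ℝ) (s : Set (Sym2 (Fin N))) : ℝ :=
  ∑ e ∈ (Set.toFinite s).toFinset, r e

open Finset

theorem wsum_eq_sum_filter {N : ℕ} (r : Sym2 (Fin N) → ℝ) (s : Set (Sym2 (Fin N)))
    [DecidablePred (· ∈ s)] : wsum r s = ∑ e with e ∈ s, r e := by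
  rw [wsum]
  congr 1
  ext e
  simp

theorem Finset.sum_sum_filter_eq_sum_card_mul {α β R : Type*} [Fintype β] [NonAssocSemiring R]
    (s : Finset α) (P : α → β → Prop) [∀ a, DecidablePred (P a)] [∀ b, DecidablePred (P · b)]
    (g : α → R) :
    ∑ b, ∑ a ∈ s with P a b, g a = ∑ a ∈ s, (#{b | P a b} : R) * g a := by
  simp_rw [sum_filter]
  rw [sum_comm]
  refine sum_congr rfl fun a _ => ?_
  rw [← sum_filter, sum_const, nsmul_eq_mul]

theorem Sym2.exists_mk_eq_mk_and_ne_iff {V ι : Type*} (f : V → ι) (u v : V) :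
    (∃ a b, s(u, v) = s(a, b) ∧ f a ≠ f b) ↔ f u ≠ f v := by
  constructor
  · rintro ⟨a, b, hab, hne⟩
    rcases Sym2.eq_iff.mp hab with ⟨rfl, rfl⟩ | ⟨rfl, rfl⟩
    exacts [hne, hne.symm]
  · exact fun h => ⟨u, v, rfl, h⟩

section Counting

variable {V ι : Type*} [Fintype ι] [DecidableEq ι]

theorem card_filter_apply_ne (f : V → ι) (i : V) :
    #{α | f i ≠ α} = Fintype.card ι - 1 := by
  rw [filter_ne, card_erase_of_mem (mem_univ _), card_univ]

theorem card_filter_forall_mem_mk_ne_add (f : V → ι) (u v : V)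
    [DecidablePred fun α => ∀ w ∈ s(u, v), f w ≠ α] :
    #{α | ∀ w ∈ s(u, v), f w ≠ α} + (if f u = f v then 1 else 2) = Fintype.card ι := by
  have hfilter : ({α | ∀ w ∈ s(u, v), f w ≠ α} : Finset ι) = {f u, f v}ᶜ := by
    ext α
    simp [or_imp, forall_and, eq_comm]
  rw [hfilter, ← card_compl_add_card {f u, f v}]
  split_ifs with h
  · rw [h, pair_eq_singleton, card_singleton]
  · rw [card_pair h]

theorem sum_sum_filter_forall_mem_ne (f : V → ι) (S : Finset (Sym2 V)) (r : Sym2 V → ℝ)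
    [∀ α, DecidablePred fun e : Sym2 V => ∀ v ∈ e, f v ≠ α]
    [DecidablePred fun e : Sym2 V => ∃ u v, e = s(u, v) ∧ f u ≠ f v] :
    ∑ α, ∑ e ∈ S with ∀ v ∈ e, f v ≠ α, r e =
      (Fintype.card ι - 1 : ℝ) * ∑ e ∈ S, r e -
        ∑ e ∈ S with ∃ u v, e = s(u, v) ∧ f u ≠ f v, r e := by
  classical
  rw [sum_sum_filter_eq_sum_card_mul, eq_sub_iff_add_eq, sum_filter, ← sum_add_distrib, mul_sum]
  refine sum_congr rfl fun e _ => ?_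
  induction e using Sym2.ind with
  | _ u v =>
  have hcard : (#{α | ∀ w ∈ s(u, v), f w ≠ α} : ℝ) + (if f u = f v then 1 else 2) =
      Fintype.card ι := mod_cast card_filter_forall_mem_mk_ne_add f u v
  rw [if_congr (Sym2.exists_mk_eq_mk_and_ne_iff f u v) rfl rfl, ← hcard]
  by_cases h : f u = f v <;> simp only [h, ne_eq, not_true_eq_false, not_false_eq_true, if_true,
    if_false] <;> ring

theorem sum_sum_filter_apply_ne (f : V → ι) (s : Finset V) (R : V → ℝ) [Nonempty ι] :
    ∑ α, ∑ i ∈ s with f i ≠ α, R i = (Fintype.card ι - 1 : ℝ) * ∑ i ∈ s, R i := by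
  rw [sum_sum_filter_eq_sum_card_mul, mul_sum]
  refine sum_congr rfl fun i _ => ?_
  rw [card_filter_apply_ne, Nat.cast_sub Fintype.card_pos, Nat.cast_one]

end Counting

theorem Function.Surjective.filter_ne_nonempty {V ι : Type*} [Fintype V] [DecidableEq ι]
    [Nontrivial ι] {f : V → ι} (hf : Function.Surjective f) (α : ι) :
    ({i | f i ≠ α} : Finset V).Nonempty := by
  obtain ⟨β, hβ⟩ := exists_ne α
  obtain ⟨i, rfl⟩ := hf β
  exact ⟨i, by simpa using hβ⟩

theorem Function.Surjective.filter_ne_ne_univ {V ι : Type*} [Fintype V] [DecidableEq ι]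
    {f : V → ι} (hf : Function.Surjective f) (α : ι) :
    ({i | f i ≠ α} : Finset V) ≠ univ := by
  obtain ⟨i, rfl⟩ := hf α
  intro h
  simpa using h.ge (mem_univ i)

theorem stmt_9_general {N p : ℕ} (hp : 2 ≤ p) (G : SimpleGraph (Fin N))
    (r : Sym2 (Fin N) → ℝ)
    (R : Fin N → ℝ)
    (hcons : ∀ I : Finset (Fin N), I.Nonempty → I ≠ Finset.univ →
      wsum r {e | e ∈ G.edgeSet ∧ ∀ v ∈ e, v ∈ I} ≤ ∑ i ∈ I, R i)
    (f : Fin N → Fin p) (hf : Function.Surjective f) :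
    wsum r G.edgeSet - ∑ i, R i ≤
      (1 / (p - 1 : ℝ)) * wsum r {e | e ∈ G.edgeSet ∧ ∃ u v, e = s(u, v) ∧ f u ≠ f v} := by
  classical
  have : Nontrivial (Fin p) := Fin.nontrivial_iff_two_le.mpr hp
  have hp1 : (0 : ℝ) < p - 1 := by
    have : (2 : ℝ) ≤ p := mod_cast hp
    linarith
  have hsum := sum_le_sum fun α (_ : α ∈ univ) =>
    hcons _ (hf.filter_ne_nonempty α) (hf.filter_ne_ne_univ α)
  simp only [wsum_eq_sum_filter, Set.mem_ofPred_eq, mem_filter, mem_univ, true_and,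
    ← filter_filter] at hsum
  rw [sum_sum_filter_forall_mem_ne, sum_sum_filter_apply_ne, Fintype.card_fin] at hsum
  rw [one_div_mul_eq_div, le_div_iff₀ hp1]
  simp only [wsum_eq_sum_filter, Set.mem_ofPred_eq, ← filter_filter]
  linarith

/-- If nonnegative `R_i` satisfy `Σ_{i∈I} R_i ≥ r[E(I)]` for all nonempty
proper `I`, then for any partition into `p ≥ 2` nonempty parts,
`r[E] - Σ_i R_i ≤ (1/(p-1))·r[E(P)]`. -/
theorem stmt_9 {N p : ℕ} (hN : 2 ≤ N) (hp : 2 ≤ p) (G : SimpleGraph (Fin N))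
    (r : Sym2 (Fin N) → ℝ) (hr : ∀ e, 0 ≤ r e)
    (R : Fin N → ℝ) (hRpos : ∀ i, 0 ≤ R i)
    (hcons : ∀ I : Finset (Fin N), I.Nonempty → I ≠ Finset.univ →
      wsum r {e | e ∈ G.edgeSet ∧ ∀ v ∈ e, v ∈ I} ≤ ∑ i ∈ I, R i)
    (f : Fin N → Fin p) (hf : Function.Surjective f) :
    wsum r G.edgeSet - ∑ i, R i ≤
      (1 / (p - 1 : ℝ)) * wsum r {e | e ∈ G.edgeSet ∧ ∃ u v, e = s(u, v) ∧ f u ≠ f v} :=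
  stmt_9_general hp G r R hcons f hf
end

section
/- For the triangle graph with edge weights a, b, c ≥ 0, the optimal value Z of the linear program Z = a+b+c - min{R_1+R_2+R_3 : R_1+R_2 ≥ a, R_1+R_3 ≥ b, R_2+R_3 ≥ c, R_i ≥ 0} equals a+b if a+b ≤ c; a+c if a+c ≤ b; b+c if b+c ≤ a; and (a+b+c)/2 otherwise. -/
/-- For the triangle network, the LP value
`Z = a+b+c - min{R₁+R₂+R₃ : R₁+R₂ ≥ a, R₁+R₃ ≥ b, R₂+R₃ ≥ c, Rᵢ ≥ 0}`
equals the indicated piecewise expression. -/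
theorem stmt_11 (a b c : ℝ) (ha : 0 ≤ a) (hb : 0 ≤ b) (hc : 0 ≤ c) :
    a + b + c - sInf {s : ℝ | ∃ R1 R2 R3 : ℝ, 0 ≤ R1 ∧ 0 ≤ R2 ∧ 0 ≤ R3 ∧
        a ≤ R1 + R2 ∧ b ≤ R1 + R3 ∧ c ≤ R2 + R3 ∧ s = R1 + R2 + R3} =
      (if a + b ≤ c then a + b
        else if a + c ≤ b then a + c
        else if b + c ≤ a then b + c
        else (a + b + c) / 2) := by
  set S := {s : ℝ | ∃ R1 R2 R3 : ℝ, 0 ≤ R1 ∧ 0 ≤ R2 ∧ 0 ≤ R3 ∧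
        a ≤ R1 + R2 ∧ b ≤ R1 + R3 ∧ c ≤ R2 + R3 ∧ s = R1 + R2 + R3} with hS
  by_cases h1 : a + b ≤ c
  · have : IsLeast S c := by
      constructor
      · exact ⟨0, a, c - a, le_rfl, ha, by linarith, by linarith, by linarith, by linarith,
          by ring⟩
      · rintro s ⟨R1, R2, R3, h⟩; linarith [h.1, h.2.1, h.2.2.1, h.2.2.2.1, h.2.2.2.2.1,
          h.2.2.2.2.2.1, h.2.2.2.2.2.2.le, h.2.2.2.2.2.2.ge]
    rw [this.csInf_eq, if_pos h1]; ring
  · by_cases h2 : a + c ≤ b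
    · have : IsLeast S b := by
        constructor
        · exact ⟨a, 0, b - a, ha, le_rfl, by linarith, by linarith, by linarith, by linarith,
            by ring⟩
        · rintro s ⟨R1, R2, R3, h⟩; linarith [h.1, h.2.1, h.2.2.1, h.2.2.2.1, h.2.2.2.2.1,
            h.2.2.2.2.2.1, h.2.2.2.2.2.2.le, h.2.2.2.2.2.2.ge]
      rw [this.csInf_eq, if_neg h1, if_pos h2]; ring
    · by_cases h3 : b + c ≤ a
      · have : IsLeast S a := by
          constructor
          · exact ⟨b, a - b, 0, hb, by linarith, le_rfl, by linarith, by linarith, by linarith,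
              by ring⟩
          · rintro s ⟨R1, R2, R3, h⟩; linarith [h.1, h.2.1, h.2.2.1, h.2.2.2.1, h.2.2.2.2.1,
              h.2.2.2.2.2.1, h.2.2.2.2.2.2.le, h.2.2.2.2.2.2.ge]
        rw [this.csInf_eq, if_neg h1, if_neg h2, if_pos h3]; ring
      · push_neg at h1 h2 h3
        have : IsLeast S ((a + b + c) / 2) := by
          constructor
          · exact ⟨(a + b - c) / 2, (a - b + c) / 2, (-a + b + c) / 2, by linarith, by linarith,
              by linarith, by linarith, by linarith, by linarith, by ring⟩
          · rintro s ⟨R1, R2, R3, h⟩; linarith [h.1, h.2.1, h.2.2.1, h.2.2.2.1, h.2.2.2.2.1,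
              h.2.2.2.2.2.1, h.2.2.2.2.2.2.le, h.2.2.2.2.2.2.ge]
        rw [this.csInf_eq, if_neg (not_le.mpr h1), if_neg (not_le.mpr h2),
          if_neg (not_le.mpr h3)]
        ring
end

section
/- Let G = ([N],E) be a graph with nonnegative real edge weights r_e, N ≥ 2, and suppose for every nonempty proper subset I ⊊ [N]: r[E]/(N-1) ≤ (r[E(I)] + r[E(I,[N]\I)])/|I|. Then the numbers R_i = r[E_i] - r[E]/(N-1) are nonnegative and satisfy Σ_{i∈I} R_i ≥ r[E(I)] for all nonempty proper I ⊊ [N], and r[E] - Σ_i R_i = r[E]/(N-1). -/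
theorem wsum_eq_sum_indicator {N : ℕ} (r : Sym2 (Fin N) → ℝ) (s : Set (Sym2 (Fin N))) :
    wsum r s = ∑ e, s.indicator r e := by
  classical
  rw [wsum, Finset.sum_indicator_eq_sum_filter]
  congr 1
  ext
  simp

theorem SimpleGraph.sum_indicator_incidenceSet {α : Type*} (G : SimpleGraph α)
    (r : Sym2 α → ℝ) (I : Finset α) (e : Sym2 α) :
    ∑ i ∈ I, {e | e ∈ G.edgeSet ∧ i ∈ e}.indicator r e =
      2 * {e | e ∈ G.edgeSet ∧ ∀ v ∈ e, v ∈ I}.indicator r e +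
        {e | e ∈ G.edgeSet ∧ ∃ u v, e = s(u, v) ∧ u ∈ I ∧ v ∉ I}.indicator r e := by
  classical
  induction e using Sym2.ind with | _ u v => ?_
  by_cases hE : G.Adj u v
  · have hsplit : ∀ i, (if i = u ∨ i = v then r s(u, v) else 0) =
        (if i = u then r s(u, v) else 0) + (if i = v then r s(u, v) else 0) := by
      intro i
      by_cases hi : i = u <;> simp [hi, hE.ne]
    simp only [Set.indicator_apply, Set.mem_ofPred_eq, SimpleGraph.mem_edgeSet, hE, true_and,
      Sym2.mem_iff, hsplit, Finset.sum_add_distrib, Finset.sum_ite_eq', Sym2.eq_iff]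
    by_cases hu : u ∈ I <;> by_cases hv : v ∈ I <;> simp [hu, hv, or_and_right, exists_or, two_mul]
  · simp [hE]

section

variable {N : ℕ} (G : SimpleGraph (Fin N)) (r : Sym2 (Fin N) → ℝ)

theorem sum_wsum_incident (I : Finset (Fin N)) :
    ∑ i ∈ I, wsum r {e | e ∈ G.edgeSet ∧ i ∈ e} =
      2 * wsum r {e | e ∈ G.edgeSet ∧ ∀ v ∈ e, v ∈ I} +
        wsum r {e | e ∈ G.edgeSet ∧ ∃ u v, e = s(u, v) ∧ u ∈ I ∧ v ∉ I} := by
  simp only [wsum_eq_sum_indicator]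
  rw [Finset.sum_comm, Finset.mul_sum, ← Finset.sum_add_distrib]
  exact Finset.sum_congr rfl fun e _ => G.sum_indicator_incidenceSet r I e

theorem sum_wsum_incident_univ :
    ∑ i, wsum r {e | e ∈ G.edgeSet ∧ i ∈ e} = 2 * wsum r G.edgeSet := by
  rw [sum_wsum_incident]
  simp [wsum_eq_sum_indicator]

theorem wsum_edges_within_singleton (i : Fin N) :
    wsum r {e | e ∈ G.edgeSet ∧ ∀ v ∈ e, v ∈ ({i} : Finset (Fin N))} = 0 := by
  refine Finset.sum_eq_zero fun e he => absurd he ?_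
  induction e using Sym2.ind with | _ u v => ?_
  simp only [Set.Finite.mem_toFinset, Set.mem_ofPred_eq, SimpleGraph.mem_edgeSet, Sym2.mem_iff,
    Finset.mem_singleton, forall_eq_or_imp, forall_eq]
  rintro ⟨hadj, rfl, rfl⟩
  exact hadj.ne rfl

theorem wsum_edges_within_le_sum_sub {c : ℝ} {I : Finset (Fin N)} (hI : I.Nonempty)
    (hc : c ≤ (wsum r {e | e ∈ G.edgeSet ∧ ∀ v ∈ e, v ∈ I} +
      wsum r {e | e ∈ G.edgeSet ∧ ∃ u v, e = s(u, v) ∧ u ∈ I ∧ v ∉ I}) / (I.card : ℝ)) :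
    wsum r {e | e ∈ G.edgeSet ∧ ∀ v ∈ e, v ∈ I} ≤
      ∑ i ∈ I, (wsum r {e | e ∈ G.edgeSet ∧ i ∈ e} - c) := by
  rw [le_div_iff₀ (by exact_mod_cast hI.card_pos)] at hc
  rw [Finset.sum_sub_distrib, sum_wsum_incident, Finset.sum_const, nsmul_eq_mul, mul_comm]
  linarith

end

theorem stmt_12_general {N : ℕ} (hN : 2 ≤ N) (G : SimpleGraph (Fin N))
    (r : Sym2 (Fin N) → ℝ)
    (h : ∀ I : Finset (Fin N), I.Nonempty → I ≠ Finset.univ →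
      wsum r G.edgeSet / (N - 1 : ℝ) ≤
        (wsum r {e | e ∈ G.edgeSet ∧ ∀ v ∈ e, v ∈ I} +
          wsum r {e | e ∈ G.edgeSet ∧ ∃ u v, e = s(u, v) ∧ u ∈ I ∧ v ∉ I}) / (I.card : ℝ))
    (R : Fin N → ℝ)
    (hR : ∀ i, R i = wsum r {e | e ∈ G.edgeSet ∧ i ∈ e} - wsum r G.edgeSet / (N - 1 : ℝ)) :
    (∀ i, 0 ≤ R i) ∧
      (∀ I : Finset (Fin N), I.Nonempty → I ≠ Finset.univ →
        wsum r {e | e ∈ G.edgeSet ∧ ∀ v ∈ e, v ∈ I} ≤ ∑ i ∈ I, R i) ∧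
      wsum r G.edgeSet - ∑ i, R i = wsum r G.edgeSet / (N - 1 : ℝ) := by
  obtain rfl : R = fun i ↦ wsum r {e | e ∈ G.edgeSet ∧ i ∈ e} - wsum r G.edgeSet / (N - 1 : ℝ) :=
    funext hR
  have within_le (I : Finset (Fin N)) (hI : I.Nonempty) (hIu : I ≠ Finset.univ) :=
    wsum_edges_within_le_sum_sub G r hI (h I hI hIu)
  refine ⟨fun i ↦ ?_, within_le, ?_⟩
  · have hi : ({i} : Finset (Fin N)) ≠ Finset.univ := fun hi ↦ by
      have := congrArg Finset.card hi
      simp only [Finset.card_singleton, Finset.card_univ, Fintype.card_fin] at this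
      omega
    have := within_le {i} (Finset.singleton_nonempty i) hi
    rw [wsum_edges_within_singleton, Finset.sum_singleton] at this
    exact this
  · have hN1 : (N - 1 : ℝ) ≠ 0 := by
      have : (2 : ℝ) ≤ N := by exact_mod_cast hN
      linarith
    rw [Finset.sum_sub_distrib, sum_wsum_incident_univ, Finset.sum_const, Finset.card_univ,
      Fintype.card_fin, nsmul_eq_mul]
    field_simp
    ring

/-- If `r[E]/(N-1) ≤ (r[E(I)] + r[E(I,[N]\I)])/|I|` for every nonempty proper
`I`, then `R_i = r[E_i] - r[E]/(N-1)` are nonnegative, satisfy `Σ_{i∈I} R_i ≥ r[E(I)]` for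
all nonempty proper `I`, and `r[E] - Σ_i R_i = r[E]/(N-1)`. -/
theorem stmt_12 {N : ℕ} (hN : 2 ≤ N) (G : SimpleGraph (Fin N))
    (r : Sym2 (Fin N) → ℝ) (hr : ∀ e, 0 ≤ r e)
    (h : ∀ I : Finset (Fin N), I.Nonempty → I ≠ Finset.univ →
      wsum r G.edgeSet / (N - 1 : ℝ) ≤
        (wsum r {e | e ∈ G.edgeSet ∧ ∀ v ∈ e, v ∈ I} +
          wsum r {e | e ∈ G.edgeSet ∧ ∃ u v, e = s(u, v) ∧ u ∈ I ∧ v ∉ I}) / (I.card : ℝ))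
    (R : Fin N → ℝ)
    (hR : ∀ i, R i = wsum r {e | e ∈ G.edgeSet ∧ i ∈ e} - wsum r G.edgeSet / (N - 1 : ℝ)) :
    (∀ i, 0 ≤ R i) ∧
      (∀ I : Finset (Fin N), I.Nonempty → I ≠ Finset.univ →
        wsum r {e | e ∈ G.edgeSet ∧ ∀ v ∈ e, v ∈ I} ≤ ∑ i ∈ I, R i) ∧
      wsum r G.edgeSet - ∑ i, R i = wsum r G.edgeSet / (N - 1 : ℝ) :=
  stmt_12_general hN G r h R hR
end

section
/- Let G = ([N],E) with nonnegative real edge weights. If the inequality (1/(N-1))·r[E] ≤ (1/(|P|-1))·r[E(P)] holds for all partitions P of the special form P_I = {{v_1},...,{v_l}, [N]\I} where I = {v_1,...,v_l} ranges over nonempty proper subsets of [N], then it holds for all partitions P of [N] into at least 2 nonempty parts. -/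
lemma wsum_eq {N : ℕ} (r : Sym2 (Fin N) → ℝ) (s : Set (Sym2 (Fin N)))
    (t : Finset (Sym2 (Fin N))) (ht : ∀ e, e ∈ t ↔ e ∈ s) :
    wsum r s = ∑ e ∈ t, r e :=
  Finset.sum_congr (by ext e; simp [Set.Finite.mem_toFinset, ht]) (fun _ _ => rfl)

/-- Classifier: an unordered pair is mapped to `some j` if both endpoints lie in part `j`,
and to `none` if the endpoints are in different parts. -/
noncomputable def cls {N p : ℕ} (f : Fin N → Fin p) : Sym2 (Fin N) → Option (Fin p) :=
  Sym2.lift ⟨fun u v => if f u = f v then some (f u) else none, by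
    intro u v
    dsimp only
    rcases eq_or_ne (f u) (f v) with h | h
    · rw [if_pos h, if_pos h.symm, h]
    · rw [if_neg h, if_neg h.symm]⟩

lemma cls_mk {N p : ℕ} (f : Fin N → Fin p) (u v : Fin N) :
    cls f s(u, v) = if f u = f v then some (f u) else none := rfl

lemma cls_eq_none_iff {N p : ℕ} (f : Fin N → Fin p) (u v : Fin N) :
    cls f s(u, v) = none ↔ f u ≠ f v := by
  rw [cls_mk]
  split_ifs with h
  · simp [h]
  · simp [h]

lemma cls_eq_some_iff {N p : ℕ} (f : Fin N → Fin p) (u v : Fin N) (j : Fin p) :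
    cls f s(u, v) = some j ↔ f u = j ∧ f v = j := by
  rw [cls_mk]
  split_ifs with h
  · simp only [Option.some_inj]
    constructor
    · rintro rfl; exact ⟨rfl, h.symm⟩
    · rintro ⟨rfl, _⟩; rfl
  · constructor
    · intro hx; simp at hx
    · rintro ⟨rfl, hv⟩; exact (h hv.symm).elim

open Classical in
/-- If `r[E]/(N-1) ≤ (1/(|P_I|-1))·r[E(P_I)]` for all partitions `P_I`
consisting of the singletons of a nonempty proper subset `I` together with the block `[N]\I`
(cross edges of `P_I` are exactly the edges with at least one endpoint in `I`, and
`|P_I| - 1 = |I|`), then `r[E]/(N-1) ≤ (1/(|P|-1))·r[E(P)]` for every partition `P` into at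
least 2 nonempty parts (given by a surjection `f : Fin N → Fin p`, `p ≥ 2`). -/
theorem stmt_13 {N : ℕ} (hN : 2 ≤ N) (G : SimpleGraph (Fin N))
    (r : Sym2 (Fin N) → ℝ) (hr : ∀ e, 0 ≤ r e)
    (h : ∀ I : Finset (Fin N), I.Nonempty → I ≠ Finset.univ →
      wsum r G.edgeSet / (N - 1 : ℝ) ≤
        wsum r {e | e ∈ G.edgeSet ∧ ∃ v ∈ e, v ∈ I} / (I.card : ℝ)) :
    ∀ p : ℕ, 2 ≤ p → ∀ f : Fin N → Fin p, Function.Surjective f →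
      wsum r G.edgeSet / (N - 1 : ℝ) ≤
        wsum r {e | e ∈ G.edgeSet ∧ ∃ u v, e = s(u, v) ∧ f u ≠ f v} / (p - 1 : ℝ) := by
  intro p hp f hf
  have hN1 : (0 : ℝ) < (N : ℝ) - 1 := by
    have : (2 : ℝ) ≤ N := by exact_mod_cast hN
    linarith
  have hp1 : (0 : ℝ) < (p : ℝ) - 1 := by
    have : (2 : ℝ) ≤ p := by exact_mod_cast hp
    linarith
  -- Finset versions of the edge sets
  set EF : Finset (Sym2 (Fin N)) := Finset.univ.filter (· ∈ G.edgeSet) with hEF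
  set Inj : Fin p → Finset (Sym2 (Fin N)) :=
    fun j => EF.filter (fun e => cls f e = some j) with hInj
  set W : ℝ := wsum r G.edgeSet with hW
  have hWEF : W = ∑ e ∈ EF, r e := wsum_eq r _ _ (by simp [hEF])
  have hWnn : 0 ≤ W := by
    rw [hWEF]; exact Finset.sum_nonneg fun e _ => hr e
  set WC : ℝ := wsum r {e | e ∈ G.edgeSet ∧ ∃ u v, e = s(u, v) ∧ f u ≠ f v} with hWC
  -- the cross edges are exactly those classified `none`
  have hCrEq : WC = ∑ e ∈ EF.filter (fun e => cls f e = none), r e := by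
    refine wsum_eq r _ _ ?_
    intro e
    induction e with
    | _ u v =>
      simp only [hEF, Finset.mem_filter, Finset.mem_univ, true_and, Set.mem_setOf_eq,
        cls_eq_none_iff]
      constructor
      · rintro ⟨he, hne⟩
        exact ⟨he, u, v, rfl, hne⟩
      · rintro ⟨he, u', v', huv, hne⟩
        refine ⟨he, ?_⟩
        rcases Sym2.eq_iff.mp huv with ⟨rfl, rfl⟩ | ⟨rfl, rfl⟩
        · exact hne
        · exact hne.symm
  -- splitting the total weight by parts
  have hsplit : ∑ e ∈ EF, r e
      = (∑ e ∈ EF.filter (fun e => cls f e = none), r e) + ∑ j, ∑ e ∈ Inj j, r e := by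
    rw [← Finset.sum_fiberwise EF (cls f) r, Fintype.sum_option]
  -- the parts
  set S : Fin p → Finset (Fin N) := fun j => Finset.univ.filter (fun v => f v = j) with hS
  have hScard : ∑ j, (S j).card = N := by
    have := Finset.card_eq_sum_card_fiberwise
      (s := (Finset.univ : Finset (Fin N))) (t := (Finset.univ : Finset (Fin p)))
      (f := f) (fun v _ => Finset.mem_univ (f v))
    simpa [hS] using this.symm
  -- per-part inequality (in multiplied form)
  have hpart : ∀ j : Fin p, (∑ e ∈ Inj j, r e) * ((N : ℝ) - 1)
      ≤ W * ((N : ℝ) - 1) - W * ((N : ℝ) - ((S j).card : ℝ)) := by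
    intro j
    set I : Finset (Fin N) := (S j)ᶜ with hI
    have hIne : I.Nonempty := by
      obtain ⟨j', hj'⟩ : ∃ j' : Fin p, j' ≠ j := by
        by_contra hc
        push_neg at hc
        have h1 : (Finset.univ : Finset (Fin p)).card ≤ 1 :=
          Finset.card_le_one.mpr (fun a _ b _ => (hc a).trans (hc b).symm)
        simp at h1
        omega
      obtain ⟨v, hv⟩ := hf j'
      exact ⟨v, by simp [hI, hS, hv, hj']⟩
    have hIuniv : I ≠ Finset.univ := by
      obtain ⟨v, hv⟩ := hf j
      intro hcon
      have : v ∈ I := hcon ▸ Finset.mem_univ v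
      simp [hI, hS, hv] at this
    have hcardle : (S j).card ≤ N := le_trans (Finset.card_le_univ _) (by simp)
    have hIcard : (I.card : ℝ) = (N : ℝ) - (S j).card := by
      rw [hI, Finset.card_compl]
      simp only [Fintype.card_fin]
      rw [Nat.cast_sub hcardle]
    have hIpos : (0 : ℝ) < (N : ℝ) - (S j).card := by
      rw [← hIcard]
      exact_mod_cast Finset.card_pos.mpr hIne
    have hle := h I hIne hIuniv
    rw [hIcard] at hle
    -- identify the numerator with W minus the inside weight
    have hnum : wsum r {e | e ∈ G.edgeSet ∧ ∃ v ∈ e, v ∈ I} = W - ∑ e ∈ Inj j, r e := by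
      have hmem : ∀ e, e ∈ EF \ Inj j ↔ e ∈ {e | e ∈ G.edgeSet ∧ ∃ v ∈ e, v ∈ I} := by
        intro e
        induction e with
        | _ u v =>
          simp only [Finset.mem_sdiff, hEF, hInj, Finset.mem_filter, Finset.mem_univ,
            true_and, cls_eq_some_iff, Set.mem_setOf_eq, hI, hS, Finset.mem_compl,
            Sym2.mem_iff]
          constructor
          · rintro ⟨he, hn⟩
            refine ⟨he, ?_⟩
            by_cases hu : f u = j
            · by_cases hv : f v = j
              · exact absurd (by tauto) hn
              · exact ⟨v, Or.inr rfl, by first | exact hv | simpa using hv⟩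
            · exact ⟨u, Or.inl rfl, by first | exact hu | simpa using hu⟩
          · rintro ⟨he, w, (rfl | rfl), hw⟩ <;> exact ⟨he, by tauto⟩
      rw [wsum_eq r _ _ hmem, Finset.sum_sdiff_eq_sub (Finset.filter_subset _ _), ← hWEF]
    rw [hnum, div_le_div_iff₀ hN1 hIpos] at hle
    nlinarith [hle]
  -- sum the per-part inequalities
  have hsum := Finset.sum_le_sum (fun j (_ : j ∈ (Finset.univ : Finset (Fin p))) => hpart j)
  have hA : ∑ j, ∑ e ∈ Inj j, r e = W - WC := by
    rw [hCrEq]; linarith [hsplit, hWEF]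
  have hL : ∑ j, (∑ e ∈ Inj j, r e) * ((N : ℝ) - 1) = (W - WC) * ((N : ℝ) - 1) := by
    rw [← Finset.sum_mul, hA]
  have hCast : ∑ j, ((S j).card : ℝ) = (N : ℝ) := by
    rw [← Nat.cast_sum, hScard]
  have h1 : ∑ j : Fin p, ((N : ℝ) - ((S j).card : ℝ)) = (p : ℝ) * (N : ℝ) - (N : ℝ) := by
    rw [Finset.sum_sub_distrib, hCast, Finset.sum_const, Finset.card_univ, Fintype.card_fin,
      nsmul_eq_mul]
  have hR : ∑ j : Fin p, (W * ((N : ℝ) - 1) - W * ((N : ℝ) - ((S j).card : ℝ)))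
      = (p : ℝ) * (W * ((N : ℝ) - 1)) - W * ((p : ℝ) * (N : ℝ) - (N : ℝ)) := by
    rw [Finset.sum_sub_distrib, Finset.sum_const, Finset.card_univ, Fintype.card_fin,
      nsmul_eq_mul, ← Finset.mul_sum, h1]
  rw [hL, hR] at hsum
  -- conclude
  rw [div_le_div_iff₀ hN1 hp1]
  nlinarith [hsum]
end

section
/- With the setup of the fractional spanning-tree packing: spanning trees T_α of G = ([N],E) with weights w_α ≥ 0 satisfying capacity constraints Σ_{α: e∈T_α} w_α ≤ r_e, and R_i defined as R_i = Σ_α w_α(d_i^{(α)} - 1) + (1/2)·Σ_{e∋i}(r_e - Σ_{α: e∈T_α} w_α), the constraints Σ_{i∈I} R_i ≥ r[E(I)] hold for every nonempty proper subset I ⊊ [N]. -/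
open Finset

namespace SimpleGraph

variable {V : Type*}

theorem Connected.exists_adj_dist_lt {H : SimpleGraph V} (hc : H.Connected) {u v : V}
    (huv : u ≠ v) : ∃ x, H.Adj u x ∧ H.dist x v < H.dist u v := by
  obtain ⟨p, hp⟩ := hc.exists_walk_length_eq_dist u v
  have hnil : ¬ p.Nil := Walk.not_nil_of_ne huv
  refine ⟨p.snd, p.adj_snd hnil, ?_⟩
  have := p.length_tail_add_one hnil
  have := dist_le p.tail
  omega

/-- Send `i ∈ I` to the first edge of a shortest path from `i` to `v`: the distance to `v` drops
along that edge, so no edge is hit from both of its endpoints. -/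
theorem Connected.card_le_card_edgeFinset_filter_exists_mem [DecidableEq V] {H : SimpleGraph V}
    [Fintype H.edgeSet] (hc : H.Connected) {I : Finset V} {v : V} (hv : v ∉ I) :
    #I ≤ #{e ∈ H.edgeFinset | ∃ u ∈ I, u ∈ e} := by
  have hne : ∀ i ∈ I, i ≠ v := fun i hi h => hv (h ▸ hi)
  choose! next hadj hdist using fun i hi => hc.exists_adj_dist_lt (hne i hi)
  refine card_le_card_of_injOn (fun i => s(i, next i)) (fun i hi => ?_) (fun i hi j hj hij => ?_)
  · simp only [coe_filter]
    exact ⟨mem_edgeFinset.mpr (hadj i hi), i, hi, Sym2.mem_mk_left _ _⟩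
  · rcases Sym2.eq_iff.mp hij with ⟨h, _⟩ | ⟨h₁, h₂⟩
    · exact h
    · have hi' := hdist i hi
      have hj' := hdist j hj
      rw [h₂, h₁] at hi'
      omega

variable [Fintype V] [DecidableEq V] (H : SimpleGraph V) [DecidableRel H.Adj]

/-- An edge with `k` endpoints in `I` is counted `k` times on the left, and
`k = [e meets I] + [e ⊆ I]`. -/
theorem sum_sum_incidenceFinset {M : Type*} [AddCommMonoid M] (I : Finset V) (f : Sym2 V → M) :
    ∑ i ∈ I, ∑ e ∈ H.incidenceFinset i, f e =
      ∑ e ∈ H.edgeFinset with ∃ u ∈ I, u ∈ e, f e + ∑ e ∈ H.edgeFinset ∩ I.sym2, f e := by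
  simp_rw [incidenceFinset_eq_filter, sum_filter]
  rw [sum_comm, ← filter_mem_eq_inter, sum_filter, ← sum_add_distrib]
  refine sum_congr rfl fun e he => ?_
  induction e with
  | _ u v =>
  have huv : u ≠ v := (mem_edgeFinset.mp he).ne
  have hsplit : ∀ x, (if x ∈ s(u, v) then f s(u, v) else 0) =
      (if x = u then f s(u, v) else 0) + (if x = v then f s(u, v) else 0) := by
    intro x
    by_cases hxu : x = u <;> by_cases hxv : x = v <;> simp_all
  rw [sum_congr rfl fun x _ => hsplit x, sum_add_distrib, sum_ite_eq', sum_ite_eq']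
  have hmeet : (∃ x ∈ I, x ∈ s(u, v)) ↔ u ∈ I ∨ v ∈ I := by
    simp only [Sym2.mem_iff, and_or_left, exists_or, exists_eq_right]
  simp only [hmeet]
  by_cases hu : u ∈ I <;> by_cases hv : v ∈ I <;> simp [hu, hv]

theorem two_mul_sum_edgeFinset_inter_sym2_le (I : Finset V) {f : Sym2 V → ℝ}
    (hf : ∀ e ∈ H.edgeFinset, 0 ≤ f e) :
    2 * ∑ e ∈ H.edgeFinset ∩ I.sym2, f e ≤ ∑ i ∈ I, ∑ e ∈ H.incidenceFinset i, f e := by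
  rw [sum_sum_incidenceFinset, two_mul]
  gcongr
  · exact fun e he _ => hf e (mem_filter.mp he).1
  · intro e he
    obtain ⟨he, heI⟩ := mem_inter.mp he
    exact mem_filter.mpr ⟨he, _, mem_sym2_iff.mp heI _ e.out_fst_mem, e.out_fst_mem⟩

theorem ncard_incidenceSet_eq_degree (v : V) : (H.incidenceSet v).ncard = H.degree v := by
  rw [← Nat.card_coe_set_eq, Nat.card_eq_fintype_card, card_incidenceSet_eq_degree]

variable {H} in
theorem Connected.card_edgeFinset_inter_sym2_add_card_le_sum_degree (hc : H.Connected)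
    {I : Finset V} {v : V} (hv : v ∉ I) :
    #(H.edgeFinset ∩ I.sym2) + #I ≤ ∑ i ∈ I, H.degree i := by
  have h := H.sum_sum_incidenceFinset I fun _ => 1
  simp only [← card_eq_sum_ones, card_incidenceFinset_eq_degree] at h
  have := hc.card_le_card_edgeFinset_filter_exists_mem hv
  omega

end SimpleGraph

open scoped Classical in
theorem sum_load_edgeFinset_inter {V ι : Type*} [Fintype V] [DecidableEq V] [Fintype ι]
    {G : SimpleGraph V} {T : ι → SimpleGraph V} (hle : ∀ α, T α ≤ G) (w : ι → ℝ)
    (S : Finset (Sym2 V)) :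
    ∑ e ∈ G.edgeFinset ∩ S, ∑ α with e ∈ (T α).edgeSet, w α =
      ∑ α, w α * #((T α).edgeFinset ∩ S) := by
  simp only [sum_filter]
  rw [sum_comm]
  refine sum_congr rfl fun α _ => ?_
  rw [← sum_filter, sum_const, nsmul_eq_mul, mul_comm]
  congr 3
  ext e
  simp only [mem_filter, mem_inter, SimpleGraph.mem_edgeFinset]
  exact ⟨fun h => ⟨h.2, h.1.2⟩, fun h => ⟨⟨SimpleGraph.edgeSet_mono (hle α) h.1, h.2⟩, h.1⟩⟩

open scoped Classical in
theorem wsum_eq_sum_edgeFinset_inter_sym2 {N : ℕ} (G : SimpleGraph (Fin N))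
    (r : Sym2 (Fin N) → ℝ) (I : Finset (Fin N)) :
    wsum r {e | e ∈ G.edgeSet ∧ ∀ v ∈ e, v ∈ I} = ∑ e ∈ G.edgeFinset ∩ I.sym2, r e := by
  rw [wsum]
  congr 1
  ext e
  simp

open scoped Classical in
theorem stmt_16_general {N m : ℕ} (G : SimpleGraph (Fin N))
    (r : Sym2 (Fin N) → ℝ)
    (T : Fin m → SimpleGraph (Fin N))
    (hle : ∀ α, T α ≤ G) (htree : ∀ α, (T α).IsTree)
    (w : Fin m → ℝ) (hw : ∀ α, 0 ≤ w α)
    (hcap : ∀ e ∈ G.edgeSet,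
      (∑ α ∈ Finset.univ.filter (fun α => e ∈ (T α).edgeSet), w α) ≤ r e)
    (R : Fin N → ℝ)
    (hR : ∀ i, R i =
      (∑ α, w α * (({e : Sym2 (Fin N) | e ∈ (T α).edgeSet ∧ i ∈ e}.ncard : ℝ) - 1)) +
        (1 / 2) * ∑ e ∈ (Set.toFinite {e : Sym2 (Fin N) | e ∈ G.edgeSet ∧ i ∈ e}).toFinset,
          (r e - ∑ α ∈ Finset.univ.filter (fun α => e ∈ (T α).edgeSet), w α)) :
    ∀ I : Finset (Fin N), I.Nonempty → I ≠ Finset.univ →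
      wsum r {e | e ∈ G.edgeSet ∧ ∀ v ∈ e, v ∈ I} ≤ ∑ i ∈ I, R i := by
  intro I _ hI
  obtain ⟨v, hv⟩ : ∃ v, v ∉ I := by simpa [eq_univ_iff_forall] using hI
  set load : Sym2 (Fin N) → ℝ := fun e => ∑ α with e ∈ (T α).edgeSet, w α
  have hdeg (α) (i) : ({e | e ∈ (T α).edgeSet ∧ i ∈ e}.ncard : ℝ) = (T α).degree i := by
    exact_mod_cast (T α).ncard_incidenceSet_eq_degree i
  have hinc (i) : (Set.toFinite {e | e ∈ G.edgeSet ∧ i ∈ e}).toFinset = G.incidenceFinset i := by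
    ext e
    simp [SimpleGraph.incidenceSet]
  have hsumR : ∑ i ∈ I, R i = ∑ α, w α * (∑ i ∈ I, ((T α).degree i : ℝ) - #I) +
      1 / 2 * ∑ i ∈ I, ∑ e ∈ G.incidenceFinset i, (r e - load e) := by
    simp only [hR, hdeg, hinc, sum_add_distrib, ← mul_sum]
    rw [sum_comm]
    congr 1
    refine sum_congr rfl fun α _ => ?_
    rw [← mul_sum, sum_sub_distrib, sum_const, nsmul_one]
  have htree_bound (α) :
      (#((T α).edgeFinset ∩ I.sym2) : ℝ) ≤ ∑ i ∈ I, ((T α).degree i : ℝ) - #I := by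
    rw [le_sub_iff_add_le]
    exact_mod_cast (htree α).connected.card_edgeFinset_inter_sym2_add_card_le_sum_degree hv
  have hslack := G.two_mul_sum_edgeFinset_inter_sym2_le I (f := fun e => r e - load e)
    fun e he => sub_nonneg.mpr (hcap e (SimpleGraph.mem_edgeFinset.mp he))
  calc wsum r {e | e ∈ G.edgeSet ∧ ∀ v ∈ e, v ∈ I}
      = ∑ e ∈ G.edgeFinset ∩ I.sym2, r e := wsum_eq_sum_edgeFinset_inter_sym2 G r I
    _ = ∑ e ∈ G.edgeFinset ∩ I.sym2, load e + ∑ e ∈ G.edgeFinset ∩ I.sym2, (r e - load e) := by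
        rw [← sum_add_distrib]
        simp only [add_sub_cancel]
    _ ≤ ∑ α, w α * (∑ i ∈ I, ((T α).degree i : ℝ) - #I) +
        1 / 2 * ∑ i ∈ I, ∑ e ∈ G.incidenceFinset i, (r e - load e) := by
        rw [sum_load_edgeFinset_inter hle]
        gcongr with α
        · exact hw α
        · exact htree_bound α
        · linarith
    _ = ∑ i ∈ I, R i := hsumR.symm

open scoped Classical in
/-- For a fractional spanning-tree packing `{T_α, w_α}` respecting capacities,
with `R_i = Σ_α w_α (d_i^{(α)} - 1) + (1/2)·Σ_{e∋i}(r_e - Σ_{α: e∈T_α} w_α)`, the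
constraints `Σ_{i∈I} R_i ≥ r[E(I)]` hold for every nonempty proper subset `I`. -/
theorem stmt_16 {N m : ℕ} (hN : 2 ≤ N) (G : SimpleGraph (Fin N))
    (r : Sym2 (Fin N) → ℝ) (hr : ∀ e, 0 ≤ r e)
    (T : Fin m → SimpleGraph (Fin N))
    (hle : ∀ α, T α ≤ G) (htree : ∀ α, (T α).IsTree)
    (w : Fin m → ℝ) (hw : ∀ α, 0 ≤ w α)
    (hcap : ∀ e ∈ G.edgeSet,
      (∑ α ∈ Finset.univ.filter (fun α => e ∈ (T α).edgeSet), w α) ≤ r e)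
    (R : Fin N → ℝ)
    (hR : ∀ i, R i =
      (∑ α, w α * (({e : Sym2 (Fin N) | e ∈ (T α).edgeSet ∧ i ∈ e}.ncard : ℝ) - 1)) +
        (1 / 2) * ∑ e ∈ (Set.toFinite {e : Sym2 (Fin N) | e ∈ G.edgeSet ∧ i ∈ e}).toFinset,
          (r e - ∑ α ∈ Finset.univ.filter (fun α => e ∈ (T α).edgeSet), w α)) :
    ∀ I : Finset (Fin N), I.Nonempty → I ≠ Finset.univ →
      wsum r {e | e ∈ G.edgeSet ∧ ∀ v ∈ e, v ∈ I} ≤ ∑ i ∈ I, R i :=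
  stmt_16_general G r T hle htree w hw hcap R hR
end
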